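/- Let p_{(i,i')} ≥ 0 for (i,i') ∈ {0,1}² with Σ_{(i,i')} p_{(i,i')} = 1, let κ_{(i,i')} be density matrices on ℂ^m, and for each (x₀,x₁) ∈ {0,1}² define the density matrix ρ_{(x₀,x₁)} = Σ_{(i,i')∈{0,1}²} p_{(i,i')}·(I₂/2) ⊗ |x_{i⊕i'} ⊕ i'⟩⟨x_{i⊕i'} ⊕ i'| ⊗ κ_{(i,i')} on ℂ²⊗ℂ²⊗ℂ^m. Let ε ≥ 0 and let ω_{(x₀,x₁)} be density matrices on the same space with Δ(ω_{(x₀,x₁)}, ρ_{(x₀,x₁)}) ≤ ε for every (x₀,x₁). Then for every POVM (M_{(x₀,x₁)})_{(x₀,x₁)∈{0,1}²}: (1/4)·Σ_{(x₀,x₁)∈{0,1}²} Tr(M_{(x₀,x₁)} ω_{(x₀,x₁)}) ≤ 1/2 + ε. -/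

import Mathlib

open Matrix Kronecker ComplexOrder

/-- The trace norm `‖A‖₁ = Tr √(Aᴴ A)` of a complex matrix. -/
noncomputable def traceNorm {n : Type*} [Fintype n] [DecidableEq n] (A : Matrix n n ℂ) : ℝ :=
  (((Matrix.posSemidef_conjTranspose_mul_self A).1.eigenvectorUnitary.1 *
    diagonal (((↑) : ℝ → ℂ) ∘ (√·) ∘ (Matrix.posSemidef_conjTranspose_mul_self A).1.eigenvalues) *
    (star (Matrix.posSemidef_conjTranspose_mul_self A).1.eigenvectorUnitary : Matrix n n ℂ)).trace).re

/-- The trace distance `Δ(ρ,σ) = ‖ρ - σ‖₁ / 2`. -/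
noncomputable def traceDist {n : Type*} [Fintype n] [DecidableEq n] (ρ σ : Matrix n n ℂ) : ℝ :=
  traceNorm (ρ - σ) / 2

open scoped Classical in
/-- Positive semidefinite square root (junk value `0` on non-PSD matrices). -/
noncomputable def psdSqrt {n : Type*} [Fintype n] [DecidableEq n] (A : Matrix n n ℂ) :
    Matrix n n ℂ :=
  if h : A.PosSemidef then h.1.eigenvectorUnitary.1 *
    diagonal (((↑) : ℝ → ℂ) ∘ (√·) ∘ h.1.eigenvalues) * (star h.1.eigenvectorUnitary : Matrix n n ℂ) else 0

/-- The fidelity `F(ρ,σ) = ‖√ρ √σ‖₁`. -/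
noncomputable def fidelity {n : Type*} [Fintype n] [DecidableEq n] (ρ σ : Matrix n n ℂ) : ℝ :=
  traceNorm (psdSqrt ρ * psdSqrt σ)

/-- A density matrix: positive semidefinite with trace 1. -/
def IsDensityMatrix {n : Type*} [Fintype n] [DecidableEq n] (ρ : Matrix n n ℂ) : Prop :=
  ρ.PosSemidef ∧ ρ.trace = 1

/-- The projector `|b⟩⟨b|` on ℂ². -/
noncomputable def proj (b : Bool) : Matrix Bool Bool ℂ := Matrix.single b b 1

/-- The strong oblivious transfer channel `F_{(x₀,x₁)}`. -/
noncomputable def sotChannel (x₀ x₁ : Bool) (ρ : Matrix (Bool × Bool) (Bool × Bool) ℂ) :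
    Matrix (Bool × Bool) (Bool × Bool) ℂ :=
  ∑ i : Bool, ∑ i' : Bool,
    ρ (i, i') (i, i') •
      (((1/2 : ℂ) • (1 : Matrix Bool Bool ℂ)) ⊗ₖ proj (xor (bif xor i i' then x₁ else x₀) i'))

/-!
Flipping both bits `x ↦ (!x.1, !x.2)` flips the basis vector in the second register of every
summand of `ρ_x`, so `ρ_x + ρ_{x̄} = σ := ∑ₐ pₐ (I₂/2) ⊗ I₂ ⊗ κₐ`, which does not depend on `x` and
has trace `2`. Hence `Tr(Mₓ ρₓ) ≤ Tr(Mₓ σ)` and `∑ₓ Tr(Mₓ ρₓ) ≤ Tr σ = 2`. Replacing `ρₓ` by `ωₓ`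
costs at most `Δ(ωₓ, ρₓ) ≤ ε` per term, because `Tr(M D) ≤ Tr D⁺ = ‖D‖₁ / 2` for `0 ≤ M ≤ 1` and
a traceless Hermitian `D`.
-/

open scoped MatrixOrder

namespace Matrix

variable {𝕜 n : Type*} [RCLike 𝕜] [Fintype n]

theorem trace_mul_nonneg {A B : Matrix n n 𝕜} (hA : 0 ≤ A) (hB : 0 ≤ B) :
    0 ≤ (A * B).trace := by
  classical
  obtain ⟨S, rfl⟩ := CStarAlgebra.nonneg_iff_eq_star_mul_self.mp hA
  rw [mul_assoc, trace_mul_comm]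
  exact (hB.posSemidef.mul_mul_conjTranspose_same S).trace_nonneg

theorem trace_mul_le_trace_mul {A B C : Matrix n n 𝕜} (hAB : A ≤ B) (hC : 0 ≤ C) :
    (A * C).trace ≤ (B * C).trace := by
  rw [← sub_nonneg, ← trace_sub, ← sub_mul]
  exact trace_mul_nonneg (sub_nonneg.mpr hAB) hC

end Matrix

section TraceNorm

variable {n : Type*} [Fintype n] [DecidableEq n]

theorem traceNorm_eq_re_trace_abs (A : Matrix n n ℂ) : traceNorm A = (CFC.abs A).trace.re := by
  rw [CFC.abs, CFC.sqrt_eq_real_sqrt _ (star_mul_self_nonneg A), cfcₙ_eq_cfc,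
    star_eq_conjTranspose, (posSemidef_conjTranspose_mul_self A).1.cfc_eq Real.sqrt]
  rfl

theorem re_trace_mul_le_half_traceNorm {M D : Matrix n n ℂ} (hM₀ : 0 ≤ M) (hM₁ : M ≤ 1)
    (hD : IsSelfAdjoint D) (htr : D.trace = 0) : (M * D).trace.re ≤ traceNorm D / 2 := by
  have hpos : (D⁺).trace = (D⁻).trace := by
    rwa [← CFC.posPart_sub_negPart D, trace_sub, sub_eq_zero] at htr
  have hnorm : traceNorm D / 2 = (D⁺).trace.re := by
    rw [traceNorm_eq_re_trace_abs, ← CFC.posPart_add_negPart D, trace_add, ← hpos,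
      Complex.add_re]
    ring
  have hle : (M * D).trace ≤ (D⁺).trace := calc
    (M * D).trace = (M * D⁺).trace - (M * D⁻).trace := by
      rw [← trace_sub, ← mul_sub, CFC.posPart_sub_negPart D]
    _ ≤ (1 * D⁺).trace - 0 :=
      sub_le_sub (trace_mul_le_trace_mul hM₁ (CFC.posPart_nonneg D))
        (trace_mul_nonneg hM₀ (CFC.negPart_nonneg D))
    _ = (D⁺).trace := by rw [one_mul, sub_zero]
  exact hnorm ▸ Complex.re_le_re hle

theorem re_trace_mul_le_add_traceDist {M ω ρ : Matrix n n ℂ} (hM₀ : 0 ≤ M) (hM₁ : M ≤ 1)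
    (hω : ω.IsHermitian) (hρ : ρ.IsHermitian) (htr : ω.trace = ρ.trace) :
    (M * ω).trace.re ≤ (M * ρ).trace.re + traceDist ω ρ := by
  have h := re_trace_mul_le_half_traceNorm hM₀ hM₁ (hω.sub hρ).isSelfAdjoint
    (by rw [trace_sub, htr, sub_self])
  rw [mul_sub, trace_sub, Complex.sub_re] at h
  rw [traceDist]
  linarith

end TraceNorm

theorem proj_nonneg (b : Bool) : 0 ≤ proj b := by
  rw [proj, ← diagonal_single]
  exact (posSemidef_diagonal_iff.mpr (Pi.single_nonneg.mpr zero_le_one)).nonneg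

theorem trace_proj (b : Bool) : (proj b).trace = 1 := by
  rw [proj, ← diagonal_single, trace_diagonal, Finset.sum_pi_single']
  simp

theorem proj_add_proj_not (b : Bool) : proj b + proj (!b) = 1 := by
  ext i j
  cases b <;> cases i <;> cases j <;> simp [proj, single]

section IdealState

variable {k : Type*}

noncomputable def idealState (p : Bool × Bool → ℝ) (κ : Bool × Bool → Matrix k k ℂ)
    (x : Bool × Bool) : Matrix ((Bool × Bool) × k) ((Bool × Bool) × k) ℂ :=
  ∑ a : Bool × Bool, p a •
    ((((1/2 : ℂ) • (1 : Matrix Bool Bool ℂ)) ⊗ₖ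
      proj (xor (bif xor a.1 a.2 then x.2 else x.1) a.2)) ⊗ₖ κ a)

noncomputable def idealStateSum (p : Bool × Bool → ℝ) (κ : Bool × Bool → Matrix k k ℂ) :
    Matrix ((Bool × Bool) × k) ((Bool × Bool) × k) ℂ :=
  ∑ a : Bool × Bool, p a •
    ((((1/2 : ℂ) • (1 : Matrix Bool Bool ℂ)) ⊗ₖ (1 : Matrix Bool Bool ℂ)) ⊗ₖ κ a)

variable {p : Bool × Bool → ℝ} {κ : Bool × Bool → Matrix k k ℂ}

theorem idealState_nonneg [Fintype k] (hp : ∀ a, 0 ≤ p a) (hκ : ∀ a, 0 ≤ κ a) (x : Bool × Bool) :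
    0 ≤ idealState p κ x := by
  have half_nonneg : 0 ≤ (1/2 : ℂ) • (1 : Matrix Bool Bool ℂ) :=
    smul_nonneg (one_div_nonneg.mpr zero_le_two) zero_le_one
  refine Finset.sum_nonneg fun a _ => smul_nonneg (hp a) ?_
  exact ((half_nonneg.posSemidef.kronecker (proj_nonneg _).posSemidef).kronecker
    (hκ a).posSemidef).nonneg

theorem trace_idealState [Fintype k] (hpsum : ∑ a, p a = 1) (hκ : ∀ a, (κ a).trace = 1)
    (x : Bool × Bool) : (idealState p κ x).trace = 1 := by
  simp [idealState, trace_sum, trace_kronecker, trace_proj, hκ, ← Complex.ofReal_sum, hpsum]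

theorem idealState_add_idealState_not (x : Bool × Bool) :
    idealState p κ x + idealState p κ (!x.1, !x.2) = idealStateSum p κ := by
  rw [idealState, idealState, idealStateSum, ← Finset.sum_add_distrib]
  refine Finset.sum_congr rfl fun a _ => ?_
  rw [← smul_add, ← add_kronecker, ← kronecker_add]
  congr
  obtain ⟨x₀, x₁⟩ := x
  obtain ⟨i, i'⟩ := a
  convert proj_add_proj_not _ using 3
  cases x₀ <;> cases x₁ <;> cases i <;> cases i' <;> rfl

theorem trace_idealStateSum [Fintype k] (hpsum : ∑ a, p a = 1) (hκ : ∀ a, (κ a).trace = 1) :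
    (idealStateSum p κ).trace = 2 := by
  rw [← idealState_add_idealState_not (false, false), trace_add, trace_idealState hpsum hκ,
    trace_idealState hpsum hκ, one_add_one_eq_two]

end IdealState

theorem stmt_13_general {m : ℕ} (ε : ℝ)
    (p : Bool × Bool → ℝ) (hp : ∀ a, 0 ≤ p a) (hpsum : ∑ a : Bool × Bool, p a = 1)
    (κ : Bool × Bool → Matrix (Fin m) (Fin m) ℂ) (hκ : ∀ a, IsDensityMatrix (κ a))
    (ω : Bool × Bool → Matrix ((Bool × Bool) × Fin m) ((Bool × Bool) × Fin m) ℂ)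
    (hω : ∀ x, IsDensityMatrix (ω x))
    (hclose : ∀ x : Bool × Bool,
      traceDist (ω x)
        (∑ a : Bool × Bool, p a •
          ((((1/2 : ℂ) • (1 : Matrix Bool Bool ℂ)) ⊗ₖ
              proj (xor (bif xor a.1 a.2 then x.2 else x.1) a.2)) ⊗ₖ κ a)) ≤ ε)
    (M : Bool × Bool → Matrix ((Bool × Bool) × Fin m) ((Bool × Bool) × Fin m) ℂ)
    (hM : ∀ x, (M x).PosSemidef) (hMsum : ∑ x : Bool × Bool, M x = 1) :
    (1/4 : ℝ) * ∑ x : Bool × Bool, ((M x * ω x).trace).re ≤ 1/2 + ε := by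
  have hM₀ x : 0 ≤ M x := (hM x).nonneg
  have hM₁ x : M x ≤ 1 := hMsum ▸ Finset.single_le_sum (fun y _ => hM₀ y) (Finset.mem_univ x)
  have hρ₀ := idealState_nonneg hp (fun a => (hκ a).1.nonneg)
  have hρtr := trace_idealState hpsum (fun a => (hκ a).2)
  have hbound x : (M x * ω x).trace.re ≤ (M x * idealStateSum p κ).trace.re + ε := calc
    (M x * ω x).trace.re ≤ (M x * idealState p κ x).trace.re + traceDist (ω x) (idealState p κ x) :=
      re_trace_mul_le_add_traceDist (hM₀ x) (hM₁ x) (hω x).1.1 (hρ₀ x).posSemidef.1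
        ((hω x).2.trans (hρtr x).symm)
    _ ≤ (M x * idealStateSum p κ).trace.re + ε := by
      refine add_le_add (Complex.re_le_re ?_) (hclose x)
      rw [← idealState_add_idealState_not x, mul_add, trace_add, le_add_iff_nonneg_right]
      exact trace_mul_nonneg (hM₀ x) (hρ₀ _)
  have hsum : ∑ x, (M x * idealStateSum p κ).trace.re = 2 := by
    rw [← Complex.re_sum, ← trace_sum, ← Finset.sum_mul, hMsum, one_mul,
      trace_idealStateSum hpsum (fun a => (hκ a).2)]
    norm_num
  calc (1/4 : ℝ) * ∑ x, (M x * ω x).trace.re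
      ≤ (1/4 : ℝ) * ∑ x, ((M x * idealStateSum p κ).trace.re + ε) := by
        gcongr with x
        exact hbound x
    _ = 1/2 + ε := by
      rw [Finset.sum_add_distrib, hsum, Finset.sum_const, Finset.card_univ]
      simp only [Fintype.card_prod, Fintype.card_bool, nsmul_eq_mul]
      ring

/-- No POVM can identify `(x₀,x₁)` from states `ε`-close to the ideal-protocol
output states with average success probability exceeding `1/2 + ε`. -/
theorem stmt_13 {m : ℕ} (ε : ℝ) (hε : 0 ≤ ε)
    (p : Bool × Bool → ℝ) (hp : ∀ a, 0 ≤ p a) (hpsum : ∑ a : Bool × Bool, p a = 1)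
    (κ : Bool × Bool → Matrix (Fin m) (Fin m) ℂ) (hκ : ∀ a, IsDensityMatrix (κ a))
    (ω : Bool × Bool → Matrix ((Bool × Bool) × Fin m) ((Bool × Bool) × Fin m) ℂ)
    (hω : ∀ x, IsDensityMatrix (ω x))
    (hclose : ∀ x : Bool × Bool,
      traceDist (ω x)
        (∑ a : Bool × Bool, p a •
          ((((1/2 : ℂ) • (1 : Matrix Bool Bool ℂ)) ⊗ₖ
              proj (xor (bif xor a.1 a.2 then x.2 else x.1) a.2)) ⊗ₖ κ a)) ≤ ε)
    (M : Bool × Bool → Matrix ((Bool × Bool) × Fin m) ((Bool × Bool) × Fin m) ℂ)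
    (hM : ∀ x, (M x).PosSemidef) (hMsum : ∑ x : Bool × Bool, M x = 1) :
    (1/4 : ℝ) * ∑ x : Bool × Bool, ((M x * ω x).trace).re ≤ 1/2 + ε :=
  stmt_13_general ε p hp hpsum κ hκ ω hω hclose M hM hMsum
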